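/- The three elements UP2, UP1, z2*D3 - w1*pi3 form a regular sequence on the polynomial ring R0[u11,u12,u13,u21,u22,u23,pi1,pi2,pi3,w1,z2]; in particular the ideal generated by the five entries of Brown's matrix b1 contains a regular sequence of length 3. -/

import Mathlib

open MvPolynomial

noncomputable section

/- The polynomial ring `R = R0[u11, u12, u13, u21, u22, u23, pi1, pi2, pi3, w1, z2]`,
with the eleven indeterminates indexed as
`0 ↦ u11, 1 ↦ u12, 2 ↦ u13, 3 ↦ u21, 4 ↦ u22, 5 ↦ u23, 6 ↦ pi1, 7 ↦ pi2, 8 ↦ pi3,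
9 ↦ w1, 10 ↦ z2`. -/

variable (R0 : Type*) [CommRing R0]

/-- `UP1 = u11*pi1 + u12*pi2 + u13*pi3`. -/
def UP1 : MvPolynomial (Fin 11) R0 := X 0 * X 6 + X 1 * X 7 + X 2 * X 8

/-- `UP2 = u21*pi1 + u22*pi2 + u23*pi3`. -/
def UP2 : MvPolynomial (Fin 11) R0 := X 3 * X 6 + X 4 * X 7 + X 5 * X 8

/-- `D1 = u12*u23 - u13*u22`. -/
def D1 : MvPolynomial (Fin 11) R0 := X 1 * X 5 - X 2 * X 4

/-- `D2 = -(u11*u23 - u13*u21)`. -/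
def D2 : MvPolynomial (Fin 11) R0 := -(X 0 * X 5 - X 2 * X 3)

/-- `D3 = u11*u22 - u12*u21`. -/
def D3 : MvPolynomial (Fin 11) R0 := X 0 * X 4 - X 1 * X 3

/-! Take a monomial order in which the leading monomials of `UP2`, `UP1`, `z2*D3 - w1*pi3` are
pairwise coprime, with unit coefficients. Then every initial segment of the sequence is a Gröbner
basis (Buchberger's first criterion), and each element `f` is a non-zero-divisor modulo the ideal
`I` of the preceding ones: if `f * x ∈ I` and `x ≠ 0` is reduced modulo `I`, the leading
monomial of `f * x` is divisible by a leading monomial of `I`; being coprime to that of `f`, the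
latter divides the leading monomial of `x`, which contradicts reducedness. -/

open scoped nonZeroDivisors MonomialOrder
open Finsupp (single)

theorem Finsupp.le_of_le_add_of_disjoint {σ : Type*} {a b c : σ →₀ ℕ} (h : a ≤ b + c)
    (hab : Disjoint a.support b.support) : a ≤ c := by
  intro i
  by_cases hi : a i = 0
  · simp [hi]
  · have hb : b i = 0 := Finsupp.notMem_support_iff.mp
      (Finset.disjoint_left.mp hab (Finsupp.mem_support_iff.mpr hi))
    simpa [hb] using h i

namespace MonomialOrder

variable {σ R : Type*} [CommRing R] (m : MonomialOrder σ)

def IsGroebnerBasis (B : Set (MvPolynomial σ R)) : Prop :=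
  ∀ f ∈ Ideal.span B, f ≠ 0 → ∃ b ∈ B, m.degree b ≤ m.degree f

variable {m}

theorem exists_sub_mem_span_forall_not_degree_le {B : Set (MvPolynomial σ R)}
    (hB : ∀ b ∈ B, IsUnit (m.leadingCoeff b)) (f : MvPolynomial σ R) :
    ∃ r, f - r ∈ Ideal.span B ∧ ∀ b ∈ B, r ≠ 0 → ¬ m.degree b ≤ m.degree r := by
  obtain ⟨g, r, hf, -, hr⟩ := m.div_set hB f
  refine ⟨r, ?_, fun b hb hr0 => hr _ (m.degree_mem_support hr0) b hb⟩
  rw [hf, add_sub_cancel_right, Finsupp.linearCombination_apply]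
  exact Ideal.sum_mem _ fun b _ => Ideal.mul_mem_left _ _ (Ideal.subset_span b.2)

variable {B : Set (MvPolynomial σ R)}

theorem IsGroebnerBasis.mem_of_mul_mem (hB : m.IsGroebnerBasis B)
    (hBu : ∀ b ∈ B, IsUnit (m.leadingCoeff b)) {f x : MvPolynomial σ R}
    (hf : m.leadingCoeff f ∈ R⁰)
    (hcop : ∀ b ∈ B, Disjoint (m.degree b).support (m.degree f).support)
    (hx : f * x ∈ Ideal.span B) : x ∈ Ideal.span B := by
  obtain ⟨r, hxr, hred⟩ := exists_sub_mem_span_forall_not_degree_le hBu x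
  suffices r = 0 by simpa [this] using hxr
  by_contra hr0
  have hfr : f * r ∈ Ideal.span B := by
    simpa [mul_sub] using Ideal.sub_mem _ hx (Ideal.mul_mem_left _ f hxr)
  have hfr0 : f * r ≠ 0 := by
    rwa [Ne, mul_left_mem_nonZeroDivisors_eq_zero_iff
      (m.mem_nonZeroDivisors_of_leadingCoeff_mem_nonZeroDivisors hf)]
  obtain ⟨b, hb, hle⟩ := hB _ hfr hfr0
  rw [m.degree_mul_of_left_mem_nonZeroDivisors hf hr0] at hle
  exact hred b hb hr0 (Finsupp.le_of_le_add_of_disjoint hle (hcop b hb))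

theorem IsGroebnerBasis.insert (hB : m.IsGroebnerBasis B)
    (hBu : ∀ b ∈ B, IsUnit (m.leadingCoeff b)) {g : MvPolynomial σ R}
    (hg : m.leadingCoeff g ∈ R⁰)
    (hcop : ∀ b ∈ B, Disjoint (m.degree b).support (m.degree g).support) :
    m.IsGroebnerBasis (insert g B) := by
  intro v hv hv0
  obtain ⟨a, z, hz, rfl⟩ := Ideal.mem_span_insert.mp hv
  obtain ⟨r, har, hred⟩ := exists_sub_mem_span_forall_not_degree_le hBu a
  set z' := z + (a - r) * g
  have hz' : z' ∈ Ideal.span B := Ideal.add_mem _ hz (Ideal.mul_mem_right _ _ har)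
  have hv : a * g + z = g * r + z' := by ring
  rw [hv] at hv0 ⊢
  by_cases hr0 : r = 0
  · obtain ⟨b, hb, hle⟩ := hB z' hz' (by simpa [hr0] using hv0)
    exact ⟨b, Set.mem_insert_of_mem _ hb, by simpa [hr0] using hle⟩
  have hdeg : m.degree (g * r) = m.degree g + m.degree r :=
    m.degree_mul_of_left_mem_nonZeroDivisors hg hr0
  by_cases hz0 : z' = 0
  · exact ⟨g, Set.mem_insert _ _, by simp [hz0, hdeg]⟩
  obtain ⟨b, hb, hle⟩ := hB z' hz' hz0
  have hne : m.degree (g * r) ≠ m.degree z' := by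
    intro h
    rw [← h, hdeg] at hle
    exact hred b hb hr0 (Finsupp.le_of_le_add_of_disjoint hle (hcop b hb))
  have hv_deg :
      m.degree (g * r + z') = m.degree (g * r) ∨ m.degree (g * r + z') = m.degree z' := by
    simp only [← m.toSyn.injective.eq_iff, m.degree_add_of_ne hne]
    exact max_choice _ _
  rcases hv_deg with h | h <;> rw [h]
  · exact ⟨g, Set.mem_insert _ _, by simp [hdeg]⟩
  · exact ⟨b, Set.mem_insert_of_mem _ hb, hle⟩

theorem IsGroebnerBasis.one_notMem_span [Nontrivial R] (hB : m.IsGroebnerBasis B)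
    (h0 : ∀ b ∈ B, m.degree b ≠ 0) : (1 : MvPolynomial σ R) ∉ Ideal.span B := by
  intro h1
  obtain ⟨b, hb, hle⟩ := hB 1 h1 one_ne_zero
  exact h0 b hb (by simpa using hle)

open RingTheory.Sequence in
theorem isWeaklyRegular_and_isGroebnerBasis_of_pairwise_disjoint_degree
    {rs : List (MvPolynomial σ R)}
    (hu : ∀ f ∈ rs, IsUnit (m.leadingCoeff f))
    (hcop : rs.Pairwise fun f g => Disjoint (m.degree f).support (m.degree g).support) :
    IsWeaklyRegular (MvPolynomial σ R) rs ∧ m.IsGroebnerBasis {f | f ∈ rs} := by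
  induction rs using List.reverseRecOn with
  | nil => exact ⟨.nil _ _, by simp [IsGroebnerBasis]⟩
  | append_singleton rs g ih =>
    rw [List.pairwise_append] at hcop
    have hu' : ∀ f ∈ rs, IsUnit (m.leadingCoeff f) :=
      fun f hf => hu f (List.mem_append_left _ hf)
    have hg : m.leadingCoeff g ∈ R⁰ := (hu g (by simp)).mem_nonZeroDivisors
    have hcop' : ∀ b ∈ {f | f ∈ rs}, Disjoint (m.degree b).support (m.degree g).support :=
      fun b hb => hcop.2.2 b hb g (List.mem_singleton_self g)
    obtain ⟨hreg, hGB⟩ := ih hu' hcop.1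
    have hset : {f | f ∈ rs ++ [g]} = insert g {f | f ∈ rs} := by ext; simp [or_comm]
    refine ⟨(isWeaklyRegular_append_iff _ _ _).mpr
      ⟨hreg, (isWeaklyRegular_singleton_iff _ _).mpr ?_⟩, hset ▸ hGB.insert hu' hg hcop'⟩
    rw [isSMulRegular_quotient_iff_mem_of_smul_mem, Ideal.smul_eq_mul, Ideal.mul_top]
    exact fun x => hGB.mem_of_mul_mem hu' hg hcop'

open RingTheory.Sequence in
theorem isRegular_of_pairwise_disjoint_degree [Nontrivial R] {rs : List (MvPolynomial σ R)}
    (hu : ∀ f ∈ rs, IsUnit (m.leadingCoeff f)) (h0 : ∀ f ∈ rs, m.degree f ≠ 0)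
    (hcop : rs.Pairwise fun f g => Disjoint (m.degree f).support (m.degree g).support) :
    IsRegular (MvPolynomial σ R) rs := by
  obtain ⟨hreg, hGB⟩ := isWeaklyRegular_and_isGroebnerBasis_of_pairwise_disjoint_degree hu hcop
  refine ⟨hreg, ?_⟩
  rw [Ideal.smul_eq_mul, Ideal.mul_top]
  exact (Ideal.ne_top_iff_one _).mpr (hGB.one_notMem_span h0) |>.symm

variable {τ : Type*}

def comapEquiv (m : MonomialOrder τ) (e : σ ≃ τ) : MonomialOrder σ where
  syn := m.syn
  toSyn := (Finsupp.domCongr e).trans m.toSyn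
  toSyn_monotone a b h := m.toSyn_monotone
    (show Finsupp.domCongr e a ≤ Finsupp.domCongr e b from fun j => by simpa using h (e.symm j))

theorem comapEquiv_lt_iff (m : MonomialOrder τ) (e : σ ≃ τ) {c d : σ →₀ ℕ} :
    c ≺[m.comapEquiv e] d ↔ Finsupp.domCongr e c ≺[m] Finsupp.domCongr e d := Iff.rfl

theorem degree_monomial_add_of_lt [Nontrivial R] {a : σ →₀ ℕ} {u : R} (hu : u ≠ 0)
    {g : MvPolynomial σ R} (hg : m.degree g ≺[m] a) :
    m.degree (monomial a u + g) = a ∧ m.leadingCoeff (monomial a u + g) = u := by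
  classical
  have ha : m.degree (monomial a u) = a := by simp [degree_monomial, hu]
  rw [← ha] at hg
  exact ⟨(degree_add_of_lt hg).trans ha,
    (leadingCoeff_add_of_lt hg).trans (leadingCoeff_monomial u)⟩

theorem degree_monomial_add_monomial_lt {a b c : σ →₀ ℕ} (r s : R) (hb : b ≺[m] a)
    (hc : c ≺[m] a) : m.degree (monomial b r + monomial c s) ≺[m] a :=
  degree_add_le.trans_lt
    (max_lt ((degree_monomial_le r).trans_lt hb) ((degree_monomial_le s).trans_lt hc))

end MonomialOrder

/-- Lexicographic order for `w1 > u12 > u13 > u21 > u22 > u23 > pi1 > pi2 > pi3 > u11 > z2`.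
The leading terms of `UP2`, `UP1`, `z2*D3 - w1*pi3` are `u21*pi1`, `u12*pi2`, `-w1*pi3`. -/
def b1Order : MonomialOrder (Fin 11) := MonomialOrder.lex.comapEquiv (Equiv.swap 0 9)

theorem b1Order_lt_iff {c d : Fin 11 →₀ ℕ} :
    c ≺[b1Order] d ↔ ∃ i, (∀ j < i, c (Equiv.swap 0 9 j) = d (Equiv.swap 0 9 j)) ∧
      c (Equiv.swap 0 9 i) < d (Equiv.swap 0 9 i) := by
  rw [b1Order, MonomialOrder.comapEquiv_lt_iff, MonomialOrder.lex_lt_iff, Finsupp.Lex.lt_iff]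
  simp

section Degrees

variable [Nontrivial R0]

theorem b1Order_degree_UP2 :
    b1Order.degree (UP2 R0) = single 3 1 + single 6 1 ∧ b1Order.leadingCoeff (UP2 R0) = 1 := by
  have h : UP2 R0 = monomial (single 3 1 + single 6 1) 1
      + (monomial (single 4 1 + single 7 1) 1 + monomial (single 5 1 + single 8 1) 1) := by
    simp only [UP2, monomial_add_single, ← C_mul_X_eq_monomial, pow_one, map_one]
    ring
  rw [h]
  refine MonomialOrder.degree_monomial_add_of_lt one_ne_zero
    (MonomialOrder.degree_monomial_add_monomial_lt _ _ ?_ ?_) <;>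
  · refine b1Order_lt_iff.mpr ⟨3, fun j hj => ?_, by simp [Equiv.swap_apply_def]⟩
    fin_cases j <;> simp_all [Equiv.swap_apply_def]

theorem b1Order_degree_UP1 :
    b1Order.degree (UP1 R0) = single 1 1 + single 7 1 ∧ b1Order.leadingCoeff (UP1 R0) = 1 := by
  have h : UP1 R0 = monomial (single 1 1 + single 7 1) 1
      + (monomial (single 0 1 + single 6 1) 1 + monomial (single 2 1 + single 8 1) 1) := by
    simp only [UP1, monomial_add_single, ← C_mul_X_eq_monomial, pow_one, map_one]
    ring
  rw [h]
  refine MonomialOrder.degree_monomial_add_of_lt one_ne_zero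
    (MonomialOrder.degree_monomial_add_monomial_lt _ _ ?_ ?_) <;>
  · refine b1Order_lt_iff.mpr ⟨1, fun j hj => ?_, by simp [Equiv.swap_apply_def]⟩
    fin_cases j <;> simp_all

theorem b1Order_degree_z2_mul_D3_sub_w1_mul_pi3 :
    b1Order.degree (X 10 * D3 R0 - X 9 * X 8) = single 9 1 + single 8 1 ∧
      b1Order.leadingCoeff (X 10 * D3 R0 - X 9 * X 8) = -1 := by
  have h : X 10 * D3 R0 - X 9 * X 8 = monomial (single 9 1 + single 8 1) (-1)
      + (monomial (single 10 1 + single 0 1 + single 4 1) 1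
        + monomial (single 10 1 + single 1 1 + single 3 1) (-1)) := by
    simp only [D3, monomial_add_single, ← C_mul_X_eq_monomial, pow_one, map_neg, map_one]
    ring
  rw [h]
  refine MonomialOrder.degree_monomial_add_of_lt (neg_ne_zero.mpr one_ne_zero)
    (MonomialOrder.degree_monomial_add_monomial_lt _ _ ?_ ?_) <;>
  exact b1Order_lt_iff.mpr ⟨0, fun j hj => absurd hj (Fin.not_lt_zero j), by simp⟩

end Degrees

/-- `UP2`, `UP1`, `z2*D3 - w1*pi3` form a regular sequence on
`R = R0[u11, …, u23, pi1, pi2, pi3, w1, z2]`; in particular the ideal generated by the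
five entries of Brown's matrix `b1` contains a regular sequence of length three. -/
theorem b1_entries_contain_regular_sequence [IsDomain R0] :
    RingTheory.Sequence.IsRegular (MvPolynomial (Fin 11) R0)
      [UP2 R0, UP1 R0, X 10 * D3 R0 - X 9 * X 8] ∧
    ∃ rs : List (MvPolynomial (Fin 11) R0), rs.length = 3 ∧
      (∀ x ∈ rs, x ∈ Ideal.span {UP1 R0, UP2 R0,
        X 10 * D1 R0 - X 9 * X 6,
        X 10 * D2 R0 - X 9 * X 7,
        X 10 * D3 R0 - X 9 * X 8}) ∧
      RingTheory.Sequence.IsRegular (MvPolynomial (Fin 11) R0) rs := by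
  obtain ⟨hd2, hl2⟩ := b1Order_degree_UP2 R0
  obtain ⟨hd1, hl1⟩ := b1Order_degree_UP1 R0
  obtain ⟨hdF, hlF⟩ := b1Order_degree_z2_mul_D3_sub_w1_mul_pi3 R0
  have hreg : RingTheory.Sequence.IsRegular (MvPolynomial (Fin 11) R0)
      [UP2 R0, UP1 R0, X 10 * D3 R0 - X 9 * X 8] := by
    apply b1Order.isRegular_of_pairwise_disjoint_degree
    · simp [hl2, hl1, hlF]
    · simp [hd2, hd1, hdF]
    · simp [hd2, hd1, hdF, Finsupp.support_single_add_single]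
  refine ⟨hreg, _, rfl, fun x hx => Ideal.subset_span ?_, hreg⟩
  simp only [List.mem_cons, List.not_mem_nil, or_false] at hx
  rcases hx with rfl | rfl | rfl <;> simp

end
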